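/- arXiv:2411.05458 — 2 statements merged into one kernel-verified Lean document; each statement's English description precedes it below -/
import Mathlib

section
/- The set of stamp foldings of order n is partitioned into equivalence classes under cyclic rotation, each of size exactly n (for n ≥ 1, every permutation has exactly n distinct cyclic rotations as strings, and being a stamp folding is invariant under rotation). -/
/-- 1-based position of symbol `e` in the string `p`. -/
def posOf (p : List ℕ) (e : ℕ) : ℕ := p.idxOf e + 1

/-- `x` lies strictly between `a` and `b`. -/
def StrictlyBetween (a b x : ℕ) : Prop := min a b < x ∧ x < max a b

/-- Two same-side arcs with endpoint pairs `{a,b}` and `{c,d}` cross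
if exactly one of `c`, `d` lies strictly between `a` and `b`. -/
def ArcsCross (a b c d : ℕ) : Prop :=
  Xor' (StrictlyBetween a b c) (StrictlyBetween a b d)

/-- A stamp folding of order `n`: a permutation of `1,…,n` (as a list, `p i` is
the stamp at position `i`) such that no two bottom arcs (joining the positions
of stamps `i` and `i+1` for odd `i`) cross, and no two top arcs (even `i`) cross. -/
def IsStampFolding (n : ℕ) (p : List ℕ) : Prop :=
  p.Perm (List.range' 1 n) ∧
  ∀ i j : ℕ, 1 ≤ i → i < j → j + 1 ≤ n → i % 2 = j % 2 →
    ¬ ArcsCross (posOf p i) (posOf p (i + 1)) (posOf p j) (posOf p (j + 1))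

/-- A semi-meander of order `n`: a stamp folding in which stamp `n` is visible
from above when `n` is even and from below when `n` is odd, i.e. no arc on the
relevant side strictly covers the position of stamp `n`. -/
def IsSemiMeander (n : ℕ) (p : List ℕ) : Prop :=
  IsStampFolding n p ∧
  ∀ i : ℕ, 1 ≤ i → i + 1 ≤ n → i % 2 = n % 2 →
    ¬ StrictlyBetween (posOf p i) (posOf p (i + 1)) (posOf p n)

/-!
Rotating a string one step to the left moves position `1` to position `n` and every other
position down by one. This is a cyclic relabelling of the positions, and whether two chords
with distinct endpoints cross does not depend on where the circle of positions is cut open.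
Hence all crossing conditions, and so the stamp-folding property, survive rotation. The `n`
rotations are pairwise distinct because the string has no repeated symbol.
-/

/-- The new position of position `x` after rotating a string of length `n` one step left. -/
def rotPos (n x : ℕ) : ℕ := if x = 1 then n else x - 1

lemma arcsCross_rotPos {n a b c d : ℕ}
    (ha : 1 ≤ a) (ha' : a ≤ n) (hb : 1 ≤ b) (hb' : b ≤ n)
    (hc : 1 ≤ c) (hc' : c ≤ n) (hd : 1 ≤ d) (hd' : d ≤ n)
    (hac : a ≠ c) (had : a ≠ d) (hbc : b ≠ c) (hbd : b ≠ d) (hcd : c ≠ d) :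
    ArcsCross (rotPos n a) (rotPos n b) (rotPos n c) (rotPos n d) ↔ ArcsCross a b c d := by
  simp only [ArcsCross, Xor', Xor, StrictlyBetween, rotPos]
  split_ifs <;> omega

section posOf

variable {p : List ℕ} {e : ℕ}

lemma one_le_posOf : 1 ≤ posOf p e := Nat.le_add_left 1 _

lemma posOf_le_length (he : e ∈ p) : posOf p e ≤ p.length :=
  List.idxOf_lt_length_iff.mpr he

lemma posOf_ne_posOf {e' : ℕ} (he : e ∈ p) (hne : e ≠ e') : posOf p e ≠ posOf p e' := fun h =>
  hne ((List.idxOf_inj he).mp (Nat.add_right_cancel h))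

lemma posOf_rotate_one (hnd : p.Nodup) (he : e ∈ p) :
    posOf (p.rotate 1) e = rotPos p.length (posOf p e) := by
  cases p with
  | nil => cases he
  | cons a t =>
    have hat : a ∉ t := (List.nodup_cons.mp hnd).1
    simp only [List.rotate_cons_succ, List.rotate_zero, posOf, rotPos]
    rcases eq_or_ne e a with rfl | hea
    · simp [List.idxOf_append_of_notMem hat]
    · have het : e ∈ t := (List.mem_cons.mp he).resolve_left hea
      simp [List.idxOf_append_of_mem het, List.idxOf_cons_ne _ hea.symm]

end posOf

namespace IsStampFolding

variable {n : ℕ} {p : List ℕ}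

lemma length_eq (h : IsStampFolding n p) : p.length = n := by
  simpa using h.1.length_eq

lemma nodup (h : IsStampFolding n p) : p.Nodup :=
  h.1.nodup_iff.mpr (List.nodup_range' _)

lemma mem (h : IsStampFolding n p) {e : ℕ} (h1 : 1 ≤ e) (he : e ≤ n) : e ∈ p :=
  h.1.mem_iff.mpr (by rw [List.mem_range'_1]; omega)

lemma rotate_one (h : IsStampFolding n p) : IsStampFolding n (p.rotate 1) := by
  refine ⟨(List.rotate_perm p 1).trans h.1, fun i j hi hij hjn hpar => ?_⟩
  have mi := h.mem (e := i) hi (by omega)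
  have mi1 := h.mem (e := i + 1) (by omega) (by omega)
  have mj := h.mem (e := j) (by omega) (by omega)
  have mj1 := h.mem (e := j + 1) (by omega) (by omega)
  have hle : ∀ {e}, e ∈ p → posOf p e ≤ n := fun he => h.length_eq ▸ posOf_le_length he
  rw [posOf_rotate_one h.nodup mi, posOf_rotate_one h.nodup mi1,
    posOf_rotate_one h.nodup mj, posOf_rotate_one h.nodup mj1, h.length_eq,
    arcsCross_rotPos one_le_posOf (hle mi) one_le_posOf (hle mi1)
      one_le_posOf (hle mj) one_le_posOf (hle mj1)
      (posOf_ne_posOf mi (by omega)) (posOf_ne_posOf mi (by omega))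
      (posOf_ne_posOf mi1 (by omega)) (posOf_ne_posOf mi1 (by omega))
      (posOf_ne_posOf mj (by omega))]
  exact h.2 i j hi hij hjn hpar

lemma rotate (h : IsStampFolding n p) (k : ℕ) : IsStampFolding n (p.rotate k) := by
  induction k with
  | zero => simpa using h
  | succ k ih => simpa [List.rotate_rotate] using ih.rotate_one

end IsStampFolding

lemma card_image_rotate_range {α : Type*} [DecidableEq α] {l : List α} (hl : l.Nodup) :
    ((Finset.range l.length).image l.rotate).card = l.length := by
  rw [Finset.card_image_of_injOn, Finset.card_range]
  intro a ha b hb hab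
  simp only [Finset.coe_range, Set.mem_Iio] at ha hb
  have hl0 : l ≠ [] := List.ne_nil_of_length_pos (by omega)
  simpa [Nat.mod_eq_of_lt ha, Nat.mod_eq_of_lt hb, hl0] using hl.rotate_congr_iff.mp hab

theorem stamp_folding_rotation_classes_general (n : ℕ) (p : List ℕ)
    (h : IsStampFolding n p) :
    (∀ k : ℕ, IsStampFolding n (p.rotate k)) ∧
    ((Finset.range n).image (fun k => p.rotate k)).card = n :=
  ⟨h.rotate, h.length_eq ▸ card_image_rotate_range h.nodup⟩

/-- The stamp foldings of order `n ≥ 1` are partitioned into equivalence classes under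
cyclic rotation, each of size exactly `n`: being a stamp folding is invariant under
rotation, and every stamp folding has exactly `n` distinct cyclic rotations. -/
theorem stamp_folding_rotation_classes (n : ℕ) (hn : 1 ≤ n) (p : List ℕ)
    (h : IsStampFolding n p) :
    (∀ k : ℕ, IsStampFolding n (p.rotate k)) ∧
    ((Finset.range n).image (fun k => p.rotate k)).card = n :=
  stamp_folding_rotation_classes_general n p h
end

section
/- A string α = p₁p₂⋯pₙ with p₁ = n is a stamp folding of order n if and only if p₂p₃⋯pₙ is a semi-meander of order n−1. -/
/-!
Stamp `n` sits at position 1 of `n :: q` and every other stamp moves one position to the right,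
so arcs not involving stamp `n` cross in `n :: q` exactly when they cross in `q`. The one new arc
joins position 1 to stamp `n - 1`; since nothing lies left of position 1, an arc on the same side
crosses it exactly when it strictly covers stamp `n - 1`, which is the visibility condition of a
semi-meander.
-/

lemma arcsCross_iff (a b c d : ℕ) :
    ArcsCross a b c d ↔
      StrictlyBetween a b c ∧ ¬ StrictlyBetween a b d ∨
        StrictlyBetween a b d ∧ ¬ StrictlyBetween a b c :=
  Iff.rfl

lemma arcsCross_succ_iff (a b c d : ℕ) :
    ArcsCross (a + 1) (b + 1) (c + 1) (d + 1) ↔ ArcsCross a b c d := by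
  simp only [arcsCross_iff, StrictlyBetween]; omega

lemma arcsCross_succ_one_iff (a b c : ℕ) :
    ArcsCross (a + 1) (b + 1) (c + 1) 1 ↔ StrictlyBetween a b c := by
  simp only [arcsCross_iff, StrictlyBetween]; omega

lemma posOf_cons_self (n : ℕ) (q : List ℕ) : posOf (n :: q) n = 1 := by
  simp [posOf]

lemma posOf_cons_of_ne {e n : ℕ} (q : List ℕ) (h : n ≠ e) :
    posOf (n :: q) e = posOf q e + 1 := by
  simp [posOf, List.idxOf_cons_ne _ h]

lemma perm_range'_succ_cons_iff (m : ℕ) (q : List ℕ) :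
    ((m + 1) :: q).Perm (List.range' 1 (m + 1)) ↔ q.Perm (List.range' 1 m) := by
  rw [List.range'_concat, one_mul, Nat.add_comm 1 m]
  exact ((List.perm_append_singleton _ _).congr_right _).trans (List.perm_cons _)

section Prepend

variable {m i j : ℕ} {q : List ℕ}

lemma posOf_succ_cons_of_le (h : i ≤ m) :
    posOf ((m + 1) :: q) i = posOf q i + 1 :=
  posOf_cons_of_ne q (by omega)

lemma arcsCross_succ_cons_iff (hi : i + 1 ≤ m) (hj : j + 1 ≤ m) :
    ArcsCross (posOf ((m + 1) :: q) i) (posOf ((m + 1) :: q) (i + 1))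
        (posOf ((m + 1) :: q) j) (posOf ((m + 1) :: q) (j + 1)) ↔
      ArcsCross (posOf q i) (posOf q (i + 1)) (posOf q j) (posOf q (j + 1)) := by
  rw [posOf_succ_cons_of_le (by omega), posOf_succ_cons_of_le hi,
    posOf_succ_cons_of_le (by omega), posOf_succ_cons_of_le hj, arcsCross_succ_iff]

lemma arcsCross_succ_cons_last_iff (hi : i + 1 ≤ m) :
    ArcsCross (posOf ((m + 1) :: q) i) (posOf ((m + 1) :: q) (i + 1))
        (posOf ((m + 1) :: q) m) (posOf ((m + 1) :: q) (m + 1)) ↔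
      StrictlyBetween (posOf q i) (posOf q (i + 1)) (posOf q m) := by
  rw [posOf_succ_cons_of_le (by omega), posOf_succ_cons_of_le hi,
    posOf_succ_cons_of_le le_rfl, posOf_cons_self, arcsCross_succ_one_iff]

lemma noCrossing_succ_cons_iff :
    (∀ i j : ℕ, 1 ≤ i → i < j → j + 1 ≤ m + 1 → i % 2 = j % 2 →
        ¬ ArcsCross (posOf ((m + 1) :: q) i) (posOf ((m + 1) :: q) (i + 1))
          (posOf ((m + 1) :: q) j) (posOf ((m + 1) :: q) (j + 1))) ↔
      (∀ i j : ℕ, 1 ≤ i → i < j → j + 1 ≤ m → i % 2 = j % 2 →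
        ¬ ArcsCross (posOf q i) (posOf q (i + 1)) (posOf q j) (posOf q (j + 1))) ∧
      ∀ i : ℕ, 1 ≤ i → i + 1 ≤ m → i % 2 = m % 2 →
        ¬ StrictlyBetween (posOf q i) (posOf q (i + 1)) (posOf q m) := by
  constructor
  · intro h
    refine ⟨fun i j hi hij hj hpar => ?_, fun i hi him hpar => ?_⟩
    · rw [← arcsCross_succ_cons_iff (by omega) hj]
      exact h i j hi hij (by omega) hpar
    · rw [← arcsCross_succ_cons_last_iff him]
      exact h i m hi (by omega) le_rfl hpar
  · rintro ⟨hcross, hvisible⟩ i j hi hij hj hpar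
    rcases Nat.lt_or_ge (j + 1) (m + 1) with hjm | hjm
    · rw [arcsCross_succ_cons_iff (by omega) (by omega)]
      exact hcross i j hi hij (by omega) hpar
    · obtain rfl : j = m := by omega
      rw [arcsCross_succ_cons_last_iff (by omega)]
      exact hvisible i hi (by omega) hpar

end Prepend

/-- A string `n · q` is a stamp folding of order `n` iff `q` is a semi-meander of
order `n - 1`. -/
theorem stamp_folding_iff_semi_meander (n : ℕ) (hn : 1 ≤ n) (q : List ℕ) :
    IsStampFolding n (n :: q) ↔ IsSemiMeander (n - 1) q := by
  obtain ⟨m, rfl⟩ : ∃ m, n = m + 1 := ⟨n - 1, by omega⟩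
  rw [IsStampFolding, IsSemiMeander, IsStampFolding, Nat.add_sub_cancel,
    perm_range'_succ_cons_iff, noCrossing_succ_cons_iff, and_assoc]
end
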